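/- arXiv:2403.01280 — 5 statements merged into one kernel-verified Lean document; each statement's English description precedes it below -/
import Mathlib

section
/- Let A ⋊_c B be a cocycle semidirect product where the action α of B on A is trivial (a central-type extension with 2-cocycle c : B × B → A). If Q is any subgroup of A ⋊_c B, then there exists a subgroup B₀ ≤ B such that Q is isomorphic to a cocycle semidirect product (Q ∩ A) ⋊_{α', c'} B₀ where (α', c') is a cocycle action cohomologous to c restricted to B₀. -/
/-- A cocycle action of a group `B` on a group `A`: maps `α : B → Aut(A)` and
`c : B × B → A` satisfying `α_g α_h = Ad(c(g,h)) α_{gh}`, the 2-cocycle identity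
`c(g,h)c(gh,k) = α_g(c(h,k)) c(g,hk)` and the normalization `c(g,1) = c(1,g) = 1`. -/
structure CocycleAction (B A : Type*) [Group B] [Group A] where
  α : B → A ≃* A
  c : B → B → A
  comp : ∀ g h a, α g (α h a) = c g h * α (g * h) a * (c g h)⁻¹
  cocycle : ∀ g h k, c g h * c (g * h) k = α g (c h k) * c g (h * k)
  c_one_left : ∀ g, c 1 g = 1
  c_one_right : ∀ g, c g 1 = 1

variable {B A : Type*} [Group B] [Group A]

/-- The cocycle semidirect product `A ⋊_{α,c} B`: the set `A × B` with the
multiplication `(x,g)·(y,h) = (x α_g(y) c(g,h), gh)`. -/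
@[ext]
structure CSP (ca : CocycleAction B A) where
  a : A
  b : B

namespace CSP

variable {ca : CocycleAction B A}

instance : Mul (CSP ca) := ⟨fun p q => ⟨p.a * ca.α p.b q.a * ca.c p.b q.b, p.b * q.b⟩⟩
instance : One (CSP ca) := ⟨⟨1, 1⟩⟩
instance : Inv (CSP ca) :=
  ⟨fun p => ⟨(ca.c p.b⁻¹ p.b)⁻¹ * (ca.α p.b⁻¹ p.a)⁻¹, p.b⁻¹⟩⟩

lemma mul_def (p q : CSP ca) :
    p * q = ⟨p.a * ca.α p.b q.a * ca.c p.b q.b, p.b * q.b⟩ := rfl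
lemma one_def : (1 : CSP ca) = ⟨1, 1⟩ := rfl
lemma inv_def (p : CSP ca) :
    p⁻¹ = ⟨(ca.c p.b⁻¹ p.b)⁻¹ * (ca.α p.b⁻¹ p.a)⁻¹, p.b⁻¹⟩ := rfl

lemma alpha_one (ca : CocycleAction B A) (x : A) : ca.α 1 x = x := by
  have h := ca.comp 1 1 x
  simp only [ca.c_one_left, one_mul, inv_one, mul_one] at h
  exact (ca.α 1).injective h

instance : Group (CSP ca) where
  mul_assoc := by
    rintro ⟨x, g⟩ ⟨y, h⟩ ⟨z, k⟩
    simp only [mul_def, CSP.mk.injEq]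
    refine ⟨?_, mul_assoc g h k⟩
    simp only [map_mul, ca.comp g h z, mul_assoc]
    rw [← ca.cocycle g h k, inv_mul_cancel_left]
  one_mul := by
    rintro ⟨y, h⟩
    simp only [one_def, mul_def, CSP.mk.injEq, one_mul, alpha_one, ca.c_one_left, mul_one]
  mul_one := by
    rintro ⟨x, g⟩
    simp only [one_def, mul_def, CSP.mk.injEq, map_one, mul_one, ca.c_one_right]
  inv_mul_cancel := by
    rintro ⟨x, g⟩
    simp only [inv_def, mul_def, one_def, CSP.mk.injEq]
    constructor
    · group
    · group

end CSP

/-!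
Let `B₀` be the image of `Q` in `B` and pick in every fibre of `Q → B₀` a point `(ξ_g, g)`, with
`ξ_1 = 1`. Since `(x, 1) * (y, g) = (x y, g)` in any cocycle semidirect product, two points of `Q`
over the same `g` differ on the left by an element of `Q ∩ A`; this gives the decomposition
`Q = {(x ξ_g, g) | x ∈ Q ∩ A, g ∈ B₀}`. When `α` is trivial, `(x, g) * (y, h) = (x y c(g,h), g h)`,
so comparing `(ξ_g, g) (ξ_h, h)` and `(ξ_g, g) (x, 1)` with the chosen points of their fibres shows
that the twisted cocycle `ξ_g ξ_h c(g,h) ξ_{gh}⁻¹` and the twisted action `Ad(ξ_g)` land in `Q ∩ A`.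
-/

namespace CSP

variable {ca : CocycleAction B A}

def proj : CSP ca →* B where
  toFun := b
  map_one' := rfl
  map_mul' _ _ := rfl

@[simp]
lemma proj_apply (p : CSP ca) : proj p = p.b := rfl

lemma mk_one_mul (x : A) (p : CSP ca) : (⟨x, 1⟩ : CSP ca) * p = ⟨x * p.a, p.b⟩ := by
  simp only [mul_def, alpha_one, ca.c_one_left, mul_one, one_mul]

lemma mk_mem_iff (Q : Subgroup (CSP ca)) {g : B} {u v : A} (hv : (⟨v, g⟩ : CSP ca) ∈ Q) :
    (⟨u, g⟩ : CSP ca) ∈ Q ↔ (⟨u * v⁻¹, 1⟩ : CSP ca) ∈ Q := by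
  have : (⟨u, g⟩ : CSP ca) = ⟨u * v⁻¹, 1⟩ * ⟨v, g⟩ := by rw [mk_one_mul, inv_mul_cancel_right]
  rw [this, Q.mul_mem_cancel_right hv]

open Classical in
noncomputable def sectionIn (Q : Subgroup (CSP ca)) (g : B) : A :=
  if h : g ≠ 1 ∧ ∃ x : A, (⟨x, g⟩ : CSP ca) ∈ Q then h.2.choose else 1

lemma sectionIn_one (Q : Subgroup (CSP ca)) : sectionIn Q 1 = 1 :=
  dif_neg fun h => h.1 rfl

lemma mk_sectionIn_mem {Q : Subgroup (CSP ca)} {g : B} (hg : g ∈ Q.map proj) :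
    (⟨sectionIn Q g, g⟩ : CSP ca) ∈ Q := by
  obtain ⟨p, hp, rfl⟩ := hg
  rw [proj_apply]
  by_cases h1 : p.b = 1
  · rw [h1, sectionIn_one]
    exact Q.one_mem
  · have hex : ∃ x : A, (⟨x, p.b⟩ : CSP ca) ∈ Q := ⟨p.a, hp⟩
    rw [sectionIn, dif_pos ⟨h1, hex⟩]
    exact hex.choose_spec

lemma mem_iff_exists_mk_mul_sectionIn (Q : Subgroup (CSP ca)) (q : CSP ca) :
    q ∈ Q ↔ ∃ x : A, (⟨x, 1⟩ : CSP ca) ∈ Q ∧ q.b ∈ Q.map proj ∧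
      q = ⟨x * sectionIn Q q.b, q.b⟩ := by
  constructor
  · intro hq
    have hb : q.b ∈ Q.map proj := ⟨q, hq, rfl⟩
    refine ⟨q.a * (sectionIn Q q.b)⁻¹, (mk_mem_iff Q (mk_sectionIn_mem hb)).1 hq, hb, ?_⟩
    rw [inv_mul_cancel_right]
  · rintro ⟨x, hx, hb, hq⟩
    rw [hq, mk_mem_iff Q (mk_sectionIn_mem hb), mul_inv_cancel_right]
    exact hx

section TrivialAction

variable (hα : ∀ g : B, ca.α g = MulEquiv.refl A)
include hα

lemma mk_mul_mk_of_alpha_eq_refl (x y : A) (g h : B) :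
    (⟨x, g⟩ : CSP ca) * ⟨y, h⟩ = ⟨x * y * ca.c g h, g * h⟩ := by
  rw [mul_def, hα]
  rfl

lemma mk_twisted_cocycle_mem {Q : Subgroup (CSP ca)} {g h : B} {u v w : A}
    (hu : (⟨u, g⟩ : CSP ca) ∈ Q) (hv : (⟨v, h⟩ : CSP ca) ∈ Q) (hw : (⟨w, g * h⟩ : CSP ca) ∈ Q) :
    (⟨u * v * ca.c g h * w⁻¹, 1⟩ : CSP ca) ∈ Q := by
  rw [← mk_mem_iff Q hw, ← mk_mul_mk_of_alpha_eq_refl hα]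
  exact Q.mul_mem hu hv

lemma mk_conj_mem {Q : Subgroup (CSP ca)} {g : B} {u x : A}
    (hu : (⟨u, g⟩ : CSP ca) ∈ Q) (hx : (⟨x, 1⟩ : CSP ca) ∈ Q) :
    (⟨u * x * u⁻¹, 1⟩ : CSP ca) ∈ Q := by
  have hux : (⟨u * x, g⟩ : CSP ca) ∈ Q := by
    simpa only [mk_mul_mk_of_alpha_eq_refl hα, ca.c_one_right, mul_one] using Q.mul_mem hu hx
  exact (mk_mem_iff Q hu).1 hux

end TrivialAction

end CSP

open CSP in
/-- Let `A ⋊_c B` be a cocycle semidirect product where the action of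
`B` on `A` is trivial.  If `Q` is any subgroup of `A ⋊_c B`, then there exist a subgroup
`B₀ ≤ B` and a map `ξ : B → A` with `ξ 1 = 1` witnessing a cocycle action
`(α', c') = (Ad(ξ), ξ_g ξ_h c(g,h) ξ_{gh}⁻¹)` of `B₀` on `A`, cohomologous to `c`
restricted to `B₀`, with values `c'(g,h) ∈ Q ∩ A`, invariance of `Q ∩ A` under `α'`,
such that `(a, g) ↦ (a ξ_g, g)` is a multiplicative bijection from
`(Q ∩ A) ⋊_{α',c'} B₀` onto `Q`. -/
theorem stmt1 (ca : CocycleAction B A)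
    (hα : ∀ g : B, ca.α g = MulEquiv.refl A)
    (Q : Subgroup (CSP ca)) :
    ∃ (B₀ : Subgroup B) (ξ : B → A),
      ξ 1 = 1 ∧
      -- the chosen section lands in `Q`
      (∀ g ∈ B₀, (⟨ξ g, g⟩ : CSP ca) ∈ Q) ∧
      -- the cohomologous 2-cocycle `c'` takes values in `Q ∩ A`
      (∀ g ∈ B₀, ∀ h ∈ B₀,
        ξ g * ξ h * ca.c g h * (ξ (g * h))⁻¹ ∈ {x : A | (⟨x, 1⟩ : CSP ca) ∈ Q}) ∧
      -- the twisted action `α' = Ad(ξ)` preserves `Q ∩ A`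
      (∀ g ∈ B₀, ∀ x : A, (⟨x, 1⟩ : CSP ca) ∈ Q →
        (⟨ξ g * x * (ξ g)⁻¹, 1⟩ : CSP ca) ∈ Q) ∧
      -- the map `(x, g) ↦ (x ξ_g, g)` is a bijection from `(Q ∩ A) × B₀` onto `Q`
      (∀ q : CSP ca, q ∈ Q ↔
        ∃ x : A, (⟨x, 1⟩ : CSP ca) ∈ Q ∧ q.b ∈ B₀ ∧ q = ⟨x * ξ q.b, q.b⟩) ∧
      -- the bijection intertwines the multiplication of `Q` with the cocycle
      -- semidirect product multiplication of `(Q ∩ A) ⋊_{α',c'} B₀`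
      (∀ g ∈ B₀, ∀ h ∈ B₀, ∀ x y : A,
        (⟨x * ξ g, g⟩ : CSP ca) * ⟨y * ξ h, h⟩ =
          ⟨(x * (ξ g * y * (ξ g)⁻¹) * (ξ g * ξ h * ca.c g h * (ξ (g * h))⁻¹)) * ξ (g * h),
            g * h⟩) := by
  refine ⟨Q.map proj, sectionIn Q, sectionIn_one Q, fun g hg => mk_sectionIn_mem hg,
    fun g hg h hh => mk_twisted_cocycle_mem hα (mk_sectionIn_mem hg) (mk_sectionIn_mem hh)
      (mk_sectionIn_mem (mul_mem hg hh)),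
    fun g hg x hx => mk_conj_mem hα (mk_sectionIn_mem hg) hx,
    mem_iff_exists_mk_mul_sectionIn Q, fun g _ h _ x y => ?_⟩
  rw [mk_mul_mk_of_alpha_eq_refl hα]
  congr 1
  group
end

section
/- Let G = A ⋊_c B be a central extension (A abelian central, c : B × B → A a 2-cocycle) of a countable group, and suppose G has Kazhdan's property (T). Then the subgroup Q generated by the image of c together with a set of coset representatives of B, i.e., Q = ⟨{c(g,h) : g,h ∈ B}, B⟩, is a normal subgroup of finite index in G. -/
set_option maxHeartbeats 1000000


variable {B A : Type*} [Group B] [Group A]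

/-- Kazhdan's property (T) for a discrete group `G`: every unitary representation of `G`
on a complex Hilbert space with almost invariant unit vectors has a nonzero invariant
vector. -/
def HasKazhdanPropertyT (G : Type*) [Group G] : Prop :=
  ∀ (H : Type) (_ : NormedAddCommGroup H) (_ : InnerProductSpace ℂ H) (_ : CompleteSpace H)
    (ρ : G →* (H ≃ₗᵢ[ℂ] H)),
    (∀ (S : Finset G) (ε : ℝ), 0 < ε → ∃ v : H, ‖v‖ = 1 ∧ ∀ g ∈ S, ‖ρ g v - v‖ < ε) →
    ∃ v : H, v ≠ 0 ∧ ∀ g : G, ρ g v = v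

open scoped ComplexConjugate ENNReal

namespace Stmt2Aux


noncomputable def sft {ι : Type} (e : ι ≃ ι) (f : lp (fun _ : ι => ℂ) 2) :
    lp (fun _ : ι => ℂ) 2 :=
  ⟨fun i => f (e.symm i), memℓp_gen (by
    have h := (lp.memℓp f).summable (by norm_num)
    exact (e.symm.summable_iff
      (f := fun i => ‖f i‖ ^ (2 : ℝ≥0∞).toReal)).mpr h)⟩

lemma sft_apply {ι : Type} (e : ι ≃ ι) (f : lp (fun _ : ι => ℂ) 2) (i : ι) :
    sft e f i = f (e.symm i) := rfl

noncomputable def permIso {ι : Type} (e : ι ≃ ι) :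
    lp (fun _ : ι => ℂ) 2 ≃ₗᵢ[ℂ] lp (fun _ : ι => ℂ) 2 where
  toFun := sft e
  invFun := sft e.symm
  left_inv f := lp.ext (funext fun i => by simp [sft_apply])
  right_inv f := lp.ext (funext fun i => by simp [sft_apply])
  map_add' f g := lp.ext (funext fun i => by
    simp [sft_apply, lp.coeFn_add, Pi.add_apply])
  map_smul' c f := lp.ext (funext fun i => by
    simp [sft_apply, lp.coeFn_smul, Pi.smul_apply])
  norm_map' f := by
    have hp : 0 < (2 : ℝ≥0∞).toReal := by norm_num
    rw [lp.norm_eq_tsum_rpow hp, lp.norm_eq_tsum_rpow hp]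
    congr 1
    exact e.symm.tsum_eq (fun i => ‖f i‖ ^ (2 : ℝ≥0∞).toReal)

lemma permIso_apply {ι : Type} (e : ι ≃ ι) (f : lp (fun _ : ι => ℂ) 2) (i : ι) :
    permIso e f i = f (e.symm i) := rfl

variable (Γ : Type*) [Group Γ] [Countable Γ]

/-- left-multiplication permutation transported to `Shrink Γ`. -/
noncomputable def permL (γ : Γ) : Shrink.{0} Γ ≃ Shrink.{0} Γ :=
  ((equivShrink.{0} Γ).symm.trans (Equiv.mulLeft γ)).trans (equivShrink.{0} Γ)

variable {Γ}

lemma permL_apply (γ : Γ) (i : Shrink.{0} Γ) :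
    permL Γ γ i = equivShrink.{0} Γ (γ * (equivShrink.{0} Γ).symm i) := rfl

lemma permL_symm_apply (γ : Γ) (i : Shrink.{0} Γ) :
    (permL Γ γ).symm i = equivShrink.{0} Γ (γ⁻¹ * (equivShrink.{0} Γ).symm i) := by
  simp [permL, Equiv.symm_trans_apply]

variable (Γ) in
noncomputable def regRep :
    Γ →* (lp (fun _ : Shrink.{0} Γ => ℂ) 2 ≃ₗᵢ[ℂ] lp (fun _ : Shrink.{0} Γ => ℂ) 2) where
  toFun γ := permIso (permL Γ γ)
  map_one' := by
    apply LinearIsometryEquiv.ext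
    intro f
    apply lp.ext
    funext i
    simp [permIso_apply, permL_symm_apply]
  map_mul' γ₁ γ₂ := by
    apply LinearIsometryEquiv.ext
    intro f
    apply lp.ext
    funext i
    show f _ = (permIso (permL Γ γ₁) ((permIso (permL Γ γ₂)) f)) i
    simp [permIso_apply, permL_symm_apply, mul_assoc]

lemma regRep_apply (γ : Γ) (f : lp (fun _ : Shrink.{0} Γ => ℂ) 2) (i : Shrink.{0} Γ) :
    regRep Γ γ f i = f (equivShrink.{0} Γ (γ⁻¹ * (equivShrink.{0} Γ).symm i)) := by
  show permIso (permL Γ γ) f i = _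
  rw [permIso_apply, permL_symm_apply]

open Finset in

lemma exists_folner {Γ : Type*} [CommGroup Γ] [DecidableEq Γ] (T : Finset Γ) {δ : ℝ}
    (hδ : 0 < δ) :
    ∃ F : Finset Γ, F.Nonempty ∧ ∀ γ ∈ T,
      (((F.image (γ * ·)) \ F).card : ℝ) ≤ δ * F.card := by
  classical
  set k := T.card with hk
  set t : Fin k → Γ := fun i => ((T.equivFin).symm i : Γ) with ht
  have htmem : ∀ γ ∈ T, ∃ i, t i = γ := by
    intro γ hγ
    exact ⟨T.equivFin ⟨γ, hγ⟩, by simp [ht]⟩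
  set Fn : ℕ → Finset Γ :=
    fun n => Finset.image (fun a : Fin k → Fin n => ∏ i, t i ^ ((a i : ℕ))) Finset.univ with hFn
  have h1 : ∀ n, 1 ≤ n → (1 : Γ) ∈ Fn n := by
    intro n hn
    refine Finset.mem_image.mpr ⟨fun _ => ⟨0, hn⟩, Finset.mem_univ _, by simp⟩
  have hmono : ∀ n, Fn n ⊆ Fn (n + 1) := by
    intro n x hx
    obtain ⟨a, -, rfl⟩ := Finset.mem_image.mp hx
    exact Finset.mem_image.mpr ⟨fun i => (a i).castSucc, Finset.mem_univ _, by simp⟩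
  have hmul : ∀ γ ∈ T, ∀ n, ∀ x ∈ Fn n, γ * x ∈ Fn (n + 1) := by
    intro γ hγ n x hx
    obtain ⟨i0, rfl⟩ := htmem γ hγ
    obtain ⟨a, -, rfl⟩ := Finset.mem_image.mp hx
    refine Finset.mem_image.mpr ⟨fun i => if i = i0 then ⟨a i + 1, by omega⟩ else
      ⟨a i, by omega⟩, Finset.mem_univ _, ?_⟩
    have : ∀ i : Fin k,
        t i ^ ((if i = i0 then (⟨a i + 1, by omega⟩ : Fin (n+1)) else ⟨a i, by omega⟩ : Fin (n+1)) : ℕ)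
          = (if i = i0 then t i else 1) * t i ^ ((a i : ℕ)) := by
      intro i
      by_cases h : i = i0 <;> simp [h, pow_succ, mul_comm]
    rw [Finset.prod_congr rfl fun i _ => this i, Finset.prod_mul_distrib,
      Finset.prod_ite_eq' Finset.univ i0 t]
    simp
  have hcard : ∀ n, (Fn n).card ≤ n ^ k := by
    intro n
    calc (Fn n).card ≤ Fintype.card (Fin k → Fin n) := Finset.card_image_le.trans (by simp)
    _ = n ^ k := by simp [Fintype.card_fun]
  have growth : ∃ n, 1 ≤ n ∧ ((Fn (n + 1)).card : ℝ) ≤ (1 + δ) * (Fn n).card := by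
    by_contra h
    push_neg at h
    have hpow : ∀ m : ℕ, ((1 + δ) : ℝ) ^ m ≤ (Fn (m + 1)).card := by
      intro m
      induction m with
      | zero =>
        have : 1 ≤ (Fn 1).card := Finset.card_pos.mpr ⟨1, h1 1 le_rfl⟩
        simpa using (Nat.one_le_cast (α := ℝ)).mpr this
      | succ m ih =>
        have h2 := h (m + 1) (by omega)
        calc ((1 + δ) : ℝ) ^ (m + 1) = (1 + δ) * (1 + δ) ^ m := by ring
        _ ≤ (1 + δ) * (Fn (m + 1)).card := by
            exact mul_le_mul_of_nonneg_left ih (by linarith)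
        _ ≤ (Fn (m + 1 + 1)).card := h2.le
    have hub : ∀ m : ℕ, ((1 + δ) : ℝ) ^ m ≤ ((m + 1 : ℕ) : ℝ) ^ k := by
      intro m
      refine (hpow m).trans ?_
      have := hcard (m + 1)
      calc ((Fn (m+1)).card : ℝ) ≤ ((m + 1) ^ k : ℕ) := Nat.cast_le.mpr this
      _ = ((m + 1 : ℕ) : ℝ) ^ k := by push_cast; ring
    have hlo := isLittleO_pow_const_const_pow_of_one_lt (R := ℝ) k
      (by linarith : (1 : ℝ) < 1 + δ)
    have hc : (0 : ℝ) < (2 * (1 + δ))⁻¹ := by positivity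
    obtain ⟨N, hN⟩ := Filter.eventually_atTop.mp (hlo.def hc)
    have hNb := hN (N + 1) (by omega)
    rw [Real.norm_eq_abs, Real.norm_eq_abs, abs_of_nonneg (by positivity),
      abs_of_nonneg (by positivity)] at hNb
    have hfin : ((1 + δ) : ℝ) ^ (N + 1) ≤ (1 / 2) * (1 + δ) ^ (N + 1) := by
      calc ((1 + δ) : ℝ) ^ (N + 1) = (1 + δ) * (1 + δ) ^ N := by ring
      _ ≤ (1 + δ) * ((N + 1 : ℕ) : ℝ) ^ k := by
          exact mul_le_mul_of_nonneg_left (hub N) (by linarith)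
      _ ≤ (1 + δ) * ((2 * (1 + δ))⁻¹ * (1 + δ) ^ (N + 1)) := by
          refine mul_le_mul_of_nonneg_left ?_ (by linarith)
          exact_mod_cast hNb
      _ = (1 / 2) * (1 + δ) ^ (N + 1) := by field_simp
    have hpos : (0 : ℝ) < (1 + δ) ^ (N + 1) := by positivity
    nlinarith
  obtain ⟨n, hn1, hgrow⟩ := growth
  refine ⟨Fn n, ⟨1, h1 n hn1⟩, ?_⟩
  intro γ hγ
  have hsub : (Fn n).image (γ * ·) \ Fn n ⊆ Fn (n + 1) \ Fn n := by
    intro x hx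
    rw [Finset.mem_sdiff] at hx ⊢
    refine ⟨?_, hx.2⟩
    obtain ⟨y, hy, rfl⟩ := Finset.mem_image.mp hx.1
    exact hmul γ hγ n y hy
  calc ((((Fn n).image (γ * ·)) \ Fn n).card : ℝ)
      ≤ ((Fn (n + 1) \ Fn n).card : ℝ) := Nat.cast_le.mpr (Finset.card_le_card hsub)
  _ = ((Fn (n + 1)).card : ℝ) - (Fn n).card := by
      rw [Finset.card_sdiff_of_subset (hmono n)]
      exact_mod_cast Nat.cast_sub (Finset.card_le_card (hmono n))
  _ ≤ (1 + δ) * (Fn n).card - (Fn n).card := by linarith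
  _ = δ * (Fn n).card := by ring

lemma finite_of_surjective_abelian {G : Type*} [Group G] {Γ : Type*} [CommGroup Γ]
    [Countable Γ] (φ : G →* Γ) (hφ : Function.Surjective φ)
    (hT : HasKazhdanPropertyT G) : Finite Γ := by
  classical
  by_contra hfin
  have hinf : Infinite Γ := not_finite_iff_infinite.mp hfin
  haveI : Infinite (Shrink.{0} Γ) := ((equivShrink.{0} Γ).infinite_iff).mp hinf
  set ι := Shrink.{0} Γ with hι
  set sh := equivShrink.{0} Γ with hsh
  set ρ := (regRep Γ).comp φ with hρ
  set w : ι → lp (fun _ : ι => ℂ) 2 := fun i => lp.single 2 i (1 : ℂ) with hw'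
  have hw : Orthonormal ℂ w := by
    rw [orthonormal_iff_ite]
    intro i j
    rw [show w i = lp.single 2 i (1 : ℂ) from rfl, lp.inner_single_left]
    by_cases h : i = j <;>
      simp [hw', h, lp.single_apply, RCLike.inner_apply]
  have hnorm : ∀ D : Finset Γ, ‖∑ x ∈ D, w (sh x)‖ ^ 2 = (D.card : ℝ) := by
    intro D
    have hws : Orthonormal ℂ (fun x : Γ => w (sh x)) := hw.comp _ sh.injective
    have h2 := hws.inner_sum (fun _ => (1 : ℂ)) (fun _ => (1 : ℂ)) D
    simp only [one_smul, map_one, one_mul, Finset.sum_const, nsmul_eq_mul, mul_one] at h2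
    rw [norm_sq_eq_re_inner (𝕜 := ℂ), h2]
    simp
  have hsq : ∀ (X : lp (fun _ : ι => ℂ) 2) (r : ℝ), ‖X‖ ^ 2 = r → ‖X‖ = Real.sqrt r := by
    intro X r h
    rw [← h, Real.sqrt_sq (norm_nonneg _)]
  have almost : ∀ (S : Finset (G)) (ε : ℝ), 0 < ε →
      ∃ v : lp (fun _ : ι => ℂ) 2, ‖v‖ = 1 ∧ ∀ g ∈ S, ‖ρ g v - v‖ < ε := by
    intro S ε hε
    set δ := (ε / 4) ^ 2 with hδdef
    obtain ⟨F, hFne, hFol⟩ := exists_folner (S.image φ) (show 0 < δ by positivity)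
    set N := F.card with hN
    have hN1 : 1 ≤ N := Finset.card_pos.mpr hFne
    have hNpos : (0 : ℝ) < N := by exact_mod_cast hN1
    have hsN : (0 : ℝ) < Real.sqrt N := Real.sqrt_pos.mpr hNpos
    set v : lp (fun _ : ι => ℂ) 2 := ∑ x ∈ F, w (sh x) with hv'
    have hvnorm : ‖v‖ = Real.sqrt N := hsq v N (hnorm F)
    set a : ℂ := (((Real.sqrt N)⁻¹ : ℝ) : ℂ) with ha
    refine ⟨a • v, ?_, ?_⟩
    · rw [norm_smul, hvnorm, ha, Complex.norm_real, Real.norm_eq_abs,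
        abs_of_nonneg (inv_nonneg.mpr (Real.sqrt_nonneg _))]
      field_simp
    · intro g hg
      set γ := φ g with hγ
      have hγT : γ ∈ S.image φ := Finset.mem_image_of_mem φ hg
      have hsingle : ∀ x : Γ, ρ g (w (sh x)) = w (sh (γ * x)) := by
        intro x
        apply lp.ext; funext i
        have hL : ρ g (w (sh x)) i = (w (sh x)) (sh (γ⁻¹ * sh.symm i)) :=
          regRep_apply γ (w (sh x)) i
        rw [hL]
        by_cases h : i = sh (γ * x)
        · subst h
          rw [show (sh : Γ → ι) (γ⁻¹ * sh.symm (sh (γ * x))) = sh x by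
            rw [Equiv.symm_apply_apply, inv_mul_cancel_left]]
          simp [hw', lp.single_apply]
        · have h1 : (sh : Γ → ι) (γ⁻¹ * sh.symm i) ≠ sh x := by
            intro hc
            apply h
            have := sh.injective hc
            rw [inv_mul_eq_iff_eq_mul] at this
            rw [← this, Equiv.apply_symm_apply]
          simp only [hw']
          rw [lp.single_apply_ne (E := fun _ : ι => ℂ) 2 (sh x) (1 : ℂ) h1,
            lp.single_apply_ne (E := fun _ : ι => ℂ) 2 (sh (γ * x)) (1 : ℂ) h]
      have hinj : Function.Injective (γ * ·) := fun x y h => mul_left_cancel h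
      set Gn := F.image (γ * ·) with hGn
      have hρv : ρ g v = ∑ y ∈ Gn, w (sh y) := by
        rw [hv', map_sum, Finset.sum_image (fun x _ y _ h => hinj h)]
        exact Finset.sum_congr rfl fun x _ => hsingle x
      have hGcard : Gn.card = N := Finset.card_image_of_injective F hinj
      have hdiff : ρ g v - v = (∑ y ∈ Gn \ F, w (sh y)) - ∑ y ∈ F \ Gn, w (sh y) := by
        rw [hρv, hv',
          ← Finset.sum_inter_add_sum_sdiff Gn F (fun y => w (sh y)),
          ← Finset.sum_inter_add_sum_sdiff F Gn (fun y => w (sh y)),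
          Finset.inter_comm]
        abel
      have hm : ((Gn \ F).card : ℝ) ≤ δ * N := hFol γ hγT
      have hm' : ((F \ Gn).card : ℝ) ≤ δ * N := by
        rw [Finset.card_sdiff_comm (by rw [hGcard])]
        exact hm
      have hb1 : ‖∑ y ∈ Gn \ F, w (sh y)‖ ≤ Real.sqrt (δ * N) := by
        rw [hsq _ _ (hnorm (Gn \ F))]
        exact Real.sqrt_le_sqrt hm
      have hb2 : ‖∑ y ∈ F \ Gn, w (sh y)‖ ≤ Real.sqrt (δ * N) := by
        rw [hsq _ _ (hnorm (F \ Gn))]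
        exact Real.sqrt_le_sqrt hm'
      have hsδ : Real.sqrt δ = ε / 4 := by
        rw [hδdef, Real.sqrt_sq (by positivity)]
      have hδN : Real.sqrt (δ * N) = (ε / 4) * Real.sqrt N := by
        rw [Real.sqrt_mul (by positivity), hsδ]
      calc ‖ρ g (a • v) - a • v‖ = ‖a • (ρ g v - v)‖ := by
            rw [map_smul, smul_sub]
      _ = ‖a‖ * ‖ρ g v - v‖ := norm_smul a _
      _ ≤ ‖a‖ * (Real.sqrt (δ * N) + Real.sqrt (δ * N)) := by
          refine mul_le_mul_of_nonneg_left ?_ (norm_nonneg a)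
          rw [hdiff]
          exact (norm_sub_le _ _).trans (add_le_add hb1 hb2)
      _ = (Real.sqrt N)⁻¹ * (2 * ((ε / 4) * Real.sqrt N)) := by
          rw [ha, Complex.norm_real, Real.norm_eq_abs, abs_of_nonneg (inv_nonneg.mpr (Real.sqrt_nonneg _)), hδN]
          ring
      _ = ε / 2 := by field_simp; ring
      _ < ε := by linarith
  obtain ⟨v, hv0, hvinv⟩ := hT (lp (fun _ : ι => ℂ) 2) inferInstance inferInstance inferInstance ρ almost
  have hconst : ∀ j : ι, v j = v (sh 1) := by
    intro j
    obtain ⟨g, hg⟩ := hφ (sh.symm j)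
    have h1 : ρ g v j = v j := by rw [hvinv g]
    have h2 : ρ g v j = v (sh ((φ g)⁻¹ * sh.symm j)) := regRep_apply (φ g) v j
    rw [h1, hg, inv_mul_cancel] at h2
    exact h2
  have hne : v (sh 1) ≠ 0 := by
    intro h0
    apply hv0
    rw [lp.eq_zero_iff_coeFn_eq_zero]
    funext j
    rw [hconst j, h0]
    rfl
  have hs := (lp.memℓp v).summable (by norm_num : 0 < (2 : ℝ≥0∞).toReal)
  have hfun : (fun i : ι => ‖v i‖ ^ (2 : ℝ≥0∞).toReal) =
      fun _ : ι => ‖v (sh 1)‖ ^ (2 : ℝ≥0∞).toReal := funext fun j => by rw [hconst j]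
  rw [hfun] at hs
  have hten := hs.tendsto_cofinite_zero
  have hzero : ‖v (sh 1)‖ ^ (2 : ℝ≥0∞).toReal = 0 :=
    tendsto_nhds_unique tendsto_const_nhds hten
  have hpos : 0 < ‖v (sh 1)‖ ^ (2 : ℝ≥0∞).toReal :=
    Real.rpow_pos_of_pos (norm_pos_iff.mpr hne) _
  exact absurd hzero (ne_of_gt hpos)

end Stmt2Aux

/-- Let `G = A ⋊_c B` be a central extension (`A` abelian central,
`c : B × B → A` a 2-cocycle) with Kazhdan's property (T).  Then the subgroup
`Q = ⟨{c(g,h) : g,h ∈ B}, B⟩` generated by the image of `c` together with the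
copy of `B` is a normal subgroup of finite index in `G`. -/
theorem stmt2 {A : Type*} [CommGroup A] {B : Type*} [Group B]
    [Countable A] [Countable B]
    (ca : CocycleAction B A)
    (hα : ∀ g : B, ca.α g = MulEquiv.refl A)
    (hT : HasKazhdanPropertyT (CSP ca)) :
    (Subgroup.closure
        ((Set.range fun p : B × B => (⟨ca.c p.1 p.2, 1⟩ : CSP ca)) ∪
          (Set.range fun b : B => (⟨1, b⟩ : CSP ca)))).Normal ∧
    (Subgroup.closure
        ((Set.range fun p : B × B => (⟨ca.c p.1 p.2, 1⟩ : CSP ca)) ∪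
          (Set.range fun b : B => (⟨1, b⟩ : CSP ca)))).FiniteIndex := by
  classical
  set Q := Subgroup.closure
      ((Set.range fun p : B × B => (⟨ca.c p.1 p.2, 1⟩ : CSP ca)) ∪
        (Set.range fun b : B => (⟨1, b⟩ : CSP ca))) with hQ
  have hBmem : ∀ b : B, (⟨1, b⟩ : CSP ca) ∈ Q := fun b =>
    Subgroup.subset_closure (Or.inr ⟨b, rfl⟩)
  have hcent : ∀ (x : A) (p : CSP ca), (⟨x, 1⟩ : CSP ca) * p = p * ⟨x, 1⟩ := by
    intro x p
    simp only [CSP.mul_def, hα, MulEquiv.refl_apply, ca.c_one_left, ca.c_one_right,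
      one_mul, mul_one, CSP.mk.injEq]
    exact ⟨mul_comm x p.a, trivial⟩
  have hdecomp : ∀ p : CSP ca, p = ⟨p.a, 1⟩ * ⟨1, p.b⟩ := by
    rintro ⟨pa, pb⟩
    simp only [CSP.mul_def, hα, MulEquiv.refl_apply, ca.c_one_left, mul_one, one_mul]
  have hNormal : Q.Normal := by
    constructor
    intro q hq p
    have hb : (⟨1, p.b⟩ : CSP ca) ∈ Q := hBmem p.b
    have key : p * q * p⁻¹ = ⟨1, p.b⟩ * q * (⟨1, p.b⟩ : CSP ca)⁻¹ := by
      conv_lhs => rw [hdecomp p]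
      rw [mul_inv_rev]
      have hregroup : (⟨p.a, 1⟩ : CSP ca) * ⟨1, p.b⟩ * q *
          ((⟨1, p.b⟩ : CSP ca)⁻¹ * (⟨p.a, 1⟩ : CSP ca)⁻¹)
          = (⟨p.a, 1⟩ : CSP ca) * ((⟨1, p.b⟩ : CSP ca) * q * (⟨1, p.b⟩ : CSP ca)⁻¹) *
            (⟨p.a, 1⟩ : CSP ca)⁻¹ := by
        group
      rw [hregroup, hcent p.a ((⟨1, p.b⟩ : CSP ca) * q * (⟨1, p.b⟩ : CSP ca)⁻¹),
        mul_inv_cancel_right]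
    rw [key]
    exact Q.mul_mem (Q.mul_mem hb hq) (Q.inv_mem hb)
  haveI := hNormal
  have hone : ∀ b : B, (QuotientGroup.mk (⟨1, b⟩ : CSP ca) : CSP ca ⧸ Q) = 1 := fun b =>
    (QuotientGroup.eq_one_iff _).mpr (hBmem b)
  have hmkdecomp : ∀ p : CSP ca,
      (QuotientGroup.mk p : CSP ca ⧸ Q) = QuotientGroup.mk ⟨p.a, 1⟩ := by
    intro p
    conv_lhs => rw [hdecomp p]
    rw [QuotientGroup.mk_mul, hone p.b, mul_one]
  have hcommΓ : ∀ x y : CSP ca ⧸ Q, x * y = y * x := by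
    intro x y
    obtain ⟨p, rfl⟩ := QuotientGroup.mk_surjective x
    obtain ⟨q, rfl⟩ := QuotientGroup.mk_surjective y
    rw [hmkdecomp p, hmkdecomp q, ← QuotientGroup.mk_mul, ← QuotientGroup.mk_mul,
      hcent p.a (⟨q.a, 1⟩ : CSP ca)]
  letI : CommGroup (CSP ca ⧸ Q) :=
    { (inferInstance : Group (CSP ca ⧸ Q)) with mul_comm := hcommΓ }
  haveI : Countable (CSP ca) := by
    have hinj : Function.Injective (fun p : CSP ca => (p.a, p.b)) := by
      rintro ⟨pa, pb⟩ ⟨qa, qb⟩ h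
      simpa [CSP.mk.injEq] using h
    exact hinj.countable
  haveI : Countable (CSP ca ⧸ Q) := Quotient.countable
  have hfin : Finite (CSP ca ⧸ Q) :=
    Stmt2Aux.finite_of_surjective_abelian (QuotientGroup.mk' Q)
      (QuotientGroup.mk'_surjective Q) hT
  haveI := hfin
  exact ⟨hNormal, Subgroup.finiteIndex_of_finite_quotient⟩
end

section
/- Let H be a countable group, and let O(g_1), O(g_2), ... be an enumeration of all finite conjugacy classes of H. For each n, let H_n = ⟨O(g_1), ..., O(g_n)⟩ be the subgroup generated by the first n finite conjugacy classes. Then each H_n is a normal subgroup of H, the centralizer C_H(H_n) has finite index in H, and H_n is center-by-finite, i.e., [H_n : Z(H_n)] < ∞. Moreover H_1 ≤ H_2 ≤ ⋯ ≤ H^{fc} and ⋃_n H_n = H^{fc}. -/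
/-!
An element has a finite conjugacy class exactly when its centralizer has finite index
(orbit–stabilizer for the conjugation action). `Hₙ` is the normal closure of `{g 0, …, g n}`,
generated by the finite conjugation-invariant union `S` of their classes. Hence
`C_H(Hₙ) = C_H(S)` is a finite intersection of finite-index centralizers, and it meets `Hₙ`
in `Z(Hₙ)`. Conversely every element of `Hₙ` is centralized by this finite-index subgroup,
so it lies in the FC-center; and every finite class is some `O(g n) ⊆ Hₙ`.
-/

open Subgroup Group

section

variable {G : Type*} [Group G]

theorem conjugatesOf_eq_range (a : G) :
    conjugatesOf a = Set.range fun k : G => k * a * k⁻¹ := by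
  ext b
  exact isConj_iff

theorem Group.iUnion_range_conj_eq_conjugatesOfSet {ι : Type*} (s : Finset ι) (g : ι → G) :
    ⋃ i ∈ s, (Set.range fun k : G => k * g i * k⁻¹) = conjugatesOfSet (g '' s) := by
  simp only [conjugatesOfSet, Set.biUnion_image, conjugatesOf_eq_range, Finset.mem_coe]

theorem Subgroup.index_centralizer_singleton (a : G) :
    (centralizer {a}).index = (conjugatesOf a).ncard := by
  have horbit : MulAction.orbit (ConjAct G) a = conjugatesOf a := by
    ext b
    exact ConjAct.mem_orbit_conjAct.trans isConj_comm
  calc (centralizer {a}).index = (MulAction.stabilizer (ConjAct G) a).index := by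
        rw [centralizer_eq_comap_stabilizer]
        exact index_comap_of_surjective _ ConjAct.toConjAct.surjective
    _ = (conjugatesOf a).ncard := by rw [MulAction.index_stabilizer, horbit]

theorem Subgroup.finiteIndex_centralizer_singleton_iff {a : G} :
    (centralizer {a}).FiniteIndex ↔ (conjugatesOf a).Finite := by
  rw [finiteIndex_iff, index_centralizer_singleton]
  exact ⟨Set.finite_of_ncard_ne_zero, fun h => Set.ncard_ne_zero_of_mem mem_conjugatesOf_self h⟩

theorem Subgroup.finiteIndex_centralizer_of_finite {s : Set G} (hs : s.Finite)
    (hconj : ∀ a ∈ s, (conjugatesOf a).Finite) : (centralizer s).FiniteIndex := by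
  rw [centralizer_eq_iInf]
  have := hs.to_subtype
  have : (⨅ a : s, centralizer {(a : G)}).FiniteIndex :=
    finiteIndex_iInf fun a => finiteIndex_centralizer_singleton_iff.2 (hconj a a.2)
  simpa only [iInf_subtype'] using this

theorem Subgroup.finite_conjugatesOf_of_mem {K : Subgroup G}
    (hK : (centralizer (K : Set G)).FiniteIndex) {a : G} (ha : a ∈ K) :
    (conjugatesOf a).Finite :=
  finiteIndex_centralizer_singleton_iff.1 <|
    finiteIndex_of_le <| centralizer_le <| Set.singleton_subset_iff.2 ha

theorem Subgroup.finiteIndex_center_of_finiteIndex_centralizer {K : Subgroup G}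
    (hK : (centralizer (K : Set G)).FiniteIndex) : (center K).FiniteIndex :=
  finiteIndex_of_le (H := (centralizer (K : Set G)).subgroupOf K) fun _ hx =>
    mem_center_iff.2 fun y => Subtype.ext (mem_centralizer_iff.1 (mem_subgroupOf.1 hx) y y.2)

theorem Group.finite_conjugatesOf_of_mem_conjugatesOfSet {s : Set G} {b : G}
    (hb : b ∈ conjugatesOfSet s) (hconj : ∀ a ∈ s, (conjugatesOf a).Finite) :
    (conjugatesOf b).Finite := by
  obtain ⟨a, ha, hab⟩ := mem_conjugatesOfSet_iff.1 hb
  exact hab.conjugatesOf_eq ▸ hconj a ha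

theorem Subgroup.finiteIndex_centralizer_normalClosure {s : Set G} (hs : s.Finite)
    (hconj : ∀ a ∈ s, (conjugatesOf a).Finite) :
    (centralizer (normalClosure s : Set G)).FiniteIndex := by
  rw [normalClosure, centralizer_closure]
  exact finiteIndex_centralizer_of_finite (hs.biUnion hconj)
    fun b hb => finite_conjugatesOf_of_mem_conjugatesOfSet hb hconj

end

theorem stmt5_general {H : Type*} [Group H]
    (g : ℕ → H)
    (hfin : ∀ n, (Set.range fun k : H => k * g n * k⁻¹).Finite)
    (hcover : ∀ h : H, (Set.range fun k : H => k * h * k⁻¹).Finite →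
      ∃ n, h ∈ Set.range fun k : H => k * g n * k⁻¹) :
    ∀ Hn : ℕ → Subgroup H,
      (Hn = fun n => Subgroup.closure
        (⋃ i ∈ Finset.range (n + 1), Set.range fun k : H => k * g i * k⁻¹)) →
      (∀ n, (Hn n).Normal) ∧
      (∀ n, (Subgroup.centralizer (Hn n : Set H)).FiniteIndex) ∧
      (∀ n, (Subgroup.center ↥(Hn n)).FiniteIndex) ∧
      (∀ n, Hn n ≤ Hn (n + 1)) ∧
      (∀ h : H, (Set.range fun k : H => k * h * k⁻¹).Finite ↔ ∃ n, h ∈ Hn n) := by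
  intro Hn hHn
  replace hHn (n : ℕ) : Hn n = normalClosure (g '' ↑(Finset.range (n + 1))) := by
    rw [hHn, normalClosure, ← iUnion_range_conj_eq_conjugatesOfSet]
  simp only [← conjugatesOf_eq_range] at hfin hcover ⊢
  have hcent (n : ℕ) : (centralizer (Hn n : Set H)).FiniteIndex := by
    rw [hHn]
    refine finiteIndex_centralizer_normalClosure ((Finset.range (n + 1)).finite_toSet.image g) ?_
    rintro _ ⟨i, -, rfl⟩
    exact hfin i
  refine ⟨fun n => hHn n ▸ normalClosure_normal, hcent,
    fun n => finiteIndex_center_of_finiteIndex_centralizer (hcent n),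
    fun n => ?_, fun h => ⟨fun hh => ?_, ?_⟩⟩
  · rw [hHn, hHn]
    exact normalClosure_mono (Set.image_mono (by simp))
  · obtain ⟨n, hn⟩ := hcover h hh
    refine ⟨n, hHn n ▸ conjugatesOfSet_subset_normalClosure ?_⟩
    exact Set.mem_biUnion ⟨n, by simp, rfl⟩ hn
  · rintro ⟨n, hn⟩
    exact finite_conjugatesOf_of_mem (hcent n) hn

/-- Let `H` be a countable group, and let `O(g 1), O(g 2), ...` be an
enumeration of (representatives of) all finite conjugacy classes of `H`.  For each `n`
let `Hₙ = ⟨O(g 0), ..., O(g n)⟩`.  Then each `Hₙ` is normal in `H`, the centralizer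
`C_H(Hₙ)` has finite index in `H`, each `Hₙ` is center-by-finite, the `Hₙ` form an
increasing tower, and their union is the FC-center `H^{fc}`. -/
theorem stmt5 {H : Type*} [Group H] [Countable H]
    (g : ℕ → H)
    (hfin : ∀ n, (Set.range fun k : H => k * g n * k⁻¹).Finite)
    (hcover : ∀ h : H, (Set.range fun k : H => k * h * k⁻¹).Finite →
      ∃ n, h ∈ Set.range fun k : H => k * g n * k⁻¹) :
    ∀ Hn : ℕ → Subgroup H,
      (Hn = fun n => Subgroup.closure
        (⋃ i ∈ Finset.range (n + 1), Set.range fun k : H => k * g i * k⁻¹)) →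
      (∀ n, (Hn n).Normal) ∧
      (∀ n, (Subgroup.centralizer (Hn n : Set H)).FiniteIndex) ∧
      (∀ n, (Subgroup.center ↥(Hn n)).FiniteIndex) ∧
      (∀ n, Hn n ≤ Hn (n + 1)) ∧
      (∀ h : H, (Set.range fun k : H => k * h * k⁻¹).Finite ↔ ∃ n, h ∈ Hn n) :=
  stmt5_general g hfin hcover
end

section
/- Let H be a countable group with FC-center H^{fc}. The conjugation action of H on the group von Neumann algebra L(H^{fc}) is weakly compact relative to H^{fc} with respect to the canonical trace: there exists a sequence of unit vectors η_n ∈ ℓ²(H^{fc}) ⊗ ℓ²(H^{fc}) of the form η_n = |E_n|^{-1/2} Σ_{a ∈ E_n} δ_a ⊗ δ_a, for finite subsets E_n ⊆ H^{fc}, such that: (i) |g E_n g^{-1} △ E_n| / |E_n| → 0 for all g ∈ H, and (ii) |h E_n △ E_n| / |E_n| → 0 for all h ∈ H^{fc}. -/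
/-!
Enumerate the FC-center as `e 0, e 1, …` and let `Sₙ` be the union of the conjugacy classes of
`1, e 0, …, e n`: a finite, conjugation-invariant subset of `H^{fc}`. Its powers `Sₙ ^ N` are then
exactly conjugation-invariant, and they grow polynomially in `N`: the centralizer `C` of `Sₙ` has
finite index, and Schreier rewriting writes every element of `Sₙ ^ N` as `t * u` with `t` in a
finite set of coset representatives and `u` a word of length at most `N` in finitely many pairwise
commuting elements of `C ∩ ⟨Sₙ⟩`. Polynomial growth forces `|Sₙ ^ (N + 1)| ≤ (1 + ε) |Sₙ ^ N|` for
some `N`; as `s • Sₙ ^ N \ Sₙ ^ N ⊆ Sₙ ^ (N + 1) \ Sₙ ^ N` for `s ∈ Sₙ`, the set `E = Sₙ ^ N` is then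
`2ε`-invariant under left translation by every element of `Sₙ`.
-/

open Filter Set Pointwise

theorem Set.Finite.pow {M : Type*} [Monoid M] {S : Set M} (hS : S.Finite) :
    ∀ n : ℕ, (S ^ n).Finite
  | 0 => by simp
  | n + 1 => by rw [pow_succ]; exact (hS.pow n).mul hS

theorem Set.ncard_mul_le {M : Type*} [Mul M] [IsCancelMul M] (S T : Set M) :
    (S * T).ncard ≤ S.ncard * T.ncard := by
  simpa only [Nat.card_coe_set_eq] using Set.natCard_mul_le

theorem Set.ncard_symmDiff_le_two_mul_ncard_sdiff {α : Type*} {A B : Set α} (hA : A.Finite)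
    (hB : B.Finite) (hAB : A.ncard = B.ncard) : (symmDiff A B).ncard ≤ 2 * (A \ B).ncard := by
  have hA' := ncard_inter_add_ncard_sdiff_eq_ncard A B hA
  have hB' := ncard_inter_add_ncard_sdiff_eq_ncard B A hB
  rw [inter_comm] at hB'
  have := ncard_union_le (A \ B) (B \ A)
  rw [Set.symmDiff_def]
  omega

theorem exists_le_one_add_mul_of_le_mul_pow {b : ℕ → ℝ} (hb : ∀ n, 0 < b n) {C : ℝ} {D : ℕ}
    (hbC : ∀ n, b n ≤ C * (n + 1) ^ D) {ε : ℝ} (hε : 0 < ε) :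
    ∃ n, b (n + 1) ≤ (1 + ε) * b n := by
  by_contra! hgrow
  have hgeom : ∀ n, b 0 * (1 + ε) ^ n ≤ b n := by
    intro n
    induction n with
    | zero => simp
    | succ n ih => rw [pow_succ, ← mul_assoc]; nlinarith [hgrow n]
  have hC : 0 < C * (1 + ε) := by
    have : 0 < C := by simpa using (hb 0).trans_le (hbC 0)
    positivity
  have hlower : ∀ n : ℕ, b 0 / (C * (1 + ε)) ≤ ((n + 1 : ℕ) : ℝ) ^ D / (1 + ε) ^ (n + 1) := by
    intro n
    rw [div_le_div_iff₀ hC (by positivity), pow_succ]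
    push_cast
    nlinarith [hgeom n, hbC n]
  have hlim := (tendsto_pow_const_div_const_pow_of_one_lt D (by linarith : 1 < 1 + ε)).comp
    (tendsto_add_atTop_nat 1)
  exact (div_pos (hb 0) hC).not_ge (ge_of_tendsto' hlim hlower)

section

variable {G : Type*} [Group G]

def fcCenter (G : Type*) [Group G] : Subgroup G where
  carrier := {g | (range fun x : G => x * g * x⁻¹).Finite}
  one_mem' := by simp [Set.finite_singleton]
  mul_mem' {a b} ha hb := by
    refine ((ha : Set.Finite _).image2 (· * ·) hb).subset ?_
    rintro _ ⟨x, rfl⟩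
    exact ⟨x * a * x⁻¹, ⟨x, rfl⟩, x * b * x⁻¹, ⟨x, rfl⟩, by group⟩
  inv_mem' {a} ha := by
    refine ((ha : Set.Finite _).image (·⁻¹)).subset ?_
    rintro _ ⟨x, rfl⟩
    exact ⟨x * a * x⁻¹, ⟨x, rfl⟩, by group⟩

theorem mem_fcCenter_iff {g : G} : g ∈ fcCenter G ↔ (conjugatesOf g).Finite := by
  have : conjugatesOf g = range fun x : G => x * g * x⁻¹ := by
    ext y
    simp [conjugatesOf, isConj_iff]
  rw [this]
  rfl

instance : (fcCenter G).Normal where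
  conj_mem a ha g := by
    rw [mem_fcCenter_iff] at ha ⊢
    rwa [← (isConj_iff.2 ⟨g, rfl⟩ : IsConj a (g * a * g⁻¹)).conjugatesOf_eq]

theorem finite_conjugatesOfSet_of_subset_fcCenter {A : Set G} (hA : A.Finite)
    (hAG : A ⊆ fcCenter G) : (Group.conjugatesOfSet A).Finite :=
  hA.biUnion fun _ ha ↦ mem_fcCenter_iff.1 (hAG ha)

theorem finiteIndex_centralizer_singleton_of_mem_fcCenter {g : G} (hg : g ∈ fcCenter G) :
    (Subgroup.centralizer {g}).FiniteIndex := by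
  have horbit : MulAction.orbit (ConjAct G) g = conjugatesOf g := by
    ext y
    rw [ConjAct.mem_orbit_conjAct]
    exact ⟨IsConj.symm, IsConj.symm⟩
  have : Finite (MulAction.orbit (ConjAct G) g) := by
    rw [horbit]
    exact (mem_fcCenter_iff.1 hg).to_subtype
  have : Finite (G ⧸ Subgroup.centralizer {g}) :=
    .of_equiv _ ((MulAction.orbitEquivQuotientStabilizer (ConjAct G) g).trans
      (Subgroup.quotientEquivOfEq (ConjAct.stabilizer_eq_centralizer g)))
  exact Subgroup.finiteIndex_of_finite_quotient

theorem finiteIndex_centralizer_of_subset_fcCenter {S : Set G} (hS : S.Finite)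
    (hSG : S ⊆ fcCenter G) : (Subgroup.centralizer S).FiniteIndex := by
  rw [Subgroup.centralizer_eq_iInf, ← hS.coe_toFinset]
  exact Subgroup.finiteIndex_iInf' _ fun g hg ↦
    finiteIndex_centralizer_singleton_of_mem_fcCenter (hSG (by simpa using hg))

theorem insert_pow_subset_powers_mul_pow {a : G} {T : Set G} (h1 : 1 ∈ T)
    (ha : T ⊆ Subgroup.centralizer {a}) (N : ℕ) :
    (insert a T) ^ N ⊆ (a ^ ·) '' ↑(Finset.range (N + 1)) * T ^ N := by
  induction N with
  | zero => simp
  | succ N ih =>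
    rw [pow_succ]
    rintro _ ⟨_, hx, y, hy, rfl⟩
    obtain ⟨_, ⟨i, hi, rfl⟩, t, ht, rfl⟩ := ih hx
    rw [Finset.coe_range, mem_Iio] at hi
    have hT : t * 1 ∈ T ^ (N + 1) := by rw [pow_succ]; exact mul_mem_mul ht h1
    rcases hy with rfl | hy
    · have hta : t ∈ Subgroup.centralizer {y} := Subgroup.pow_subset ha ht
      refine ⟨y ^ (i + 1), ⟨i + 1, by simp; omega, rfl⟩, t * 1, hT, ?_⟩
      dsimp only
      rw [mul_one, mul_assoc, ← hta y rfl, pow_succ, mul_assoc]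
    · refine ⟨a ^ i, ⟨i, by simp; omega, rfl⟩, t * y, ?_, by group⟩
      rw [pow_succ]
      exact mul_mem_mul ht hy

theorem ncard_insert_one_pow_le_of_pairwise_commute {U : Set G} (hU : U.Finite)
    (hcomm : U.Pairwise Commute) (N : ℕ) : ((insert 1 U) ^ N).ncard ≤ (N + 1) ^ U.ncard := by
  induction U, hU using Set.Finite.induction_on generalizing N with
  | empty => simp
  | @insert a U haU hU ih =>
    have haT : insert 1 U ⊆ Subgroup.centralizer {a} := by
      rintro t (rfl | ht)
      · exact one_mem _
      · exact Subgroup.mem_centralizer_singleton_iff.2 (hcomm (mem_insert a U)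
          (mem_insert_of_mem a ht) (ne_of_mem_of_not_mem ht haU).symm).eq.symm
    calc ((insert 1 (insert a U)) ^ N).ncard
        ≤ ((a ^ ·) '' ↑(Finset.range (N + 1)) * (insert 1 U) ^ N).ncard := by
          rw [insert_comm]
          exact ncard_le_ncard (insert_pow_subset_powers_mul_pow (mem_insert 1 U) haT N)
            (((Finset.finite_toSet _).image _).mul ((hU.insert 1).pow N))
      _ ≤ ((a ^ ·) '' ↑(Finset.range (N + 1)) : Set G).ncard * ((insert 1 U) ^ N).ncard :=
          Set.ncard_mul_le _ _
      _ ≤ (N + 1) * (N + 1) ^ U.ncard := by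
          gcongr
          · exact (ncard_image_le (Finset.finite_toSet _)).trans (by simp)
          · exact ih (hcomm.mono (subset_insert a U)) N
      _ = (N + 1) ^ (insert a U).ncard := by rw [ncard_insert_of_notMem haU hU, pow_succ']

theorem Subgroup.exists_finite_subset_mul_of_finiteIndex (K C : Subgroup G) [C.FiniteIndex] :
    ∃ R : Set G, R.Finite ∧ 1 ∈ R ∧ R ⊆ K ∧ (K : Set G) ⊆ R * C := by
  have hrep : ∀ q ∈ ((↑) '' (K : Set G) : Set (G ⧸ C)), ∃ r ∈ K, (r : G ⧸ C) = q :=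
    fun _ h ↦ h
  choose! ρ hρK hρ using hrep
  refine ⟨insert 1 (ρ '' ((↑) '' (K : Set G))), (toFinite _).insert 1, mem_insert 1 _, ?_, ?_⟩
  · rintro _ (rfl | ⟨q, hq, rfl⟩)
    exacts [K.one_mem, hρK q hq]
  · intro x hx
    have hq : (x : G ⧸ C) ∈ (↑) '' (K : Set G) := mem_image_of_mem _ hx
    refine ⟨ρ x, mem_insert_of_mem 1 (mem_image_of_mem ρ hq), (ρ x)⁻¹ * x, ?_,
      mul_inv_cancel_left _ _⟩
    exact QuotientGroup.eq.1 (hρ x hq)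

theorem exists_pow_subset_mul_insert_one_pow {S : Set G} (hS : S.Finite)
    [(Subgroup.centralizer S).FiniteIndex] :
    ∃ R U : Set G, R.Finite ∧ U.Finite ∧ U.Pairwise Commute ∧
      ∀ N, S ^ N ⊆ R * (insert 1 U) ^ N := by
  set K := Subgroup.closure S
  set C := Subgroup.centralizer S
  obtain ⟨R, hR, h1R, hRK, hKRC⟩ := K.exists_finite_subset_mul_of_finiteIndex C
  have hCK : ∀ c ∈ C, ∀ k ∈ K, Commute c k := fun c hc k hk ↦
    ((Subgroup.centralizer_closure S ▸ hc : c ∈ Subgroup.centralizer K) k hk).symm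
  set U := R⁻¹ * R * S ∩ ↑(C ⊓ K)
  have hUCK : insert 1 U ⊆ ↑(C ⊓ K) := insert_subset (one_mem _) inter_subset_right
  refine ⟨R, U, hR, ((hR.inv.mul hR).mul hS).inter_of_left _,
    fun u hu v hv _ ↦ hCK u hu.2.1 v hv.2.2, fun N ↦ ?_⟩
  induction N with
  | zero => simpa using h1R
  | succ N ih =>
    rw [pow_succ, pow_succ']
    rintro _ ⟨_, hx, s, hs, rfl⟩
    obtain ⟨t, ht, u, hu, rfl⟩ := ih hx
    have hsK : s ∈ K := Subgroup.subset_closure hs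
    obtain ⟨t', ht', c, hc, hts⟩ := hKRC (K.mul_mem (hRK ht) hsK)
    change t' * c = t * s at hts
    have hc_eq : c = t'⁻¹ * t * s := by rw [mul_assoc, ← hts, inv_mul_cancel_left]
    have hcU : c ∈ U := by
      refine ⟨⟨t'⁻¹ * t, mul_mem_mul (inv_mem_inv.2 ht') ht, s, hs, hc_eq.symm⟩, hc, ?_⟩
      rw [hc_eq]
      exact K.mul_mem (K.mul_mem (K.inv_mem (hRK ht')) (hRK ht)) hsK
    refine ⟨t', ht', c * u, mul_mem_mul (mem_insert_of_mem 1 hcU) hu, ?_⟩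
    have hus : Commute u s := hCK u (Subgroup.pow_subset hUCK hu).1 s hsK
    change t' * (c * u) = t * u * s
    rw [← mul_assoc, hts, mul_assoc, ← hus.eq, mul_assoc]

theorem exists_ncard_pow_le_mul_pow {S : Set G} (hS : S.Finite)
    [(Subgroup.centralizer S).FiniteIndex] :
    ∃ c D : ℕ, ∀ N, (S ^ N).ncard ≤ c * (N + 1) ^ D := by
  obtain ⟨R, U, hR, hU, hcomm, hcover⟩ := exists_pow_subset_mul_insert_one_pow hS
  refine ⟨R.ncard, U.ncard, fun N ↦ ?_⟩
  calc (S ^ N).ncard ≤ (R * (insert 1 U) ^ N).ncard :=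
        ncard_le_ncard (hcover N) (hR.mul ((hU.insert 1).pow N))
    _ ≤ R.ncard * ((insert 1 U) ^ N).ncard := Set.ncard_mul_le _ _
    _ ≤ R.ncard * (N + 1) ^ U.ncard := by
        gcongr
        exact ncard_insert_one_pow_le_of_pairwise_commute hU hcomm N

theorem exists_pow_ncard_symmDiff_le {S : Set G} (hS : S.Finite) (h1 : 1 ∈ S) {c D : ℕ}
    (hgrowth : ∀ N, (S ^ N).ncard ≤ c * (N + 1) ^ D) {ε : ℝ} (hε : 0 < ε) :
    ∃ N, ∀ s ∈ S, ((symmDiff ((s * ·) '' S ^ N) (S ^ N)).ncard : ℝ) ≤ ε * (S ^ N).ncard := by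
  have hpos : ∀ N, 0 < ((S ^ N).ncard : ℝ) := fun N ↦ by
    exact_mod_cast (ncard_pos (hS.pow N)).2 ⟨1, one_mem_pow h1⟩
  obtain ⟨N, hN⟩ := exists_le_one_add_mul_of_le_mul_pow hpos (C := c)
    (fun N ↦ by exact_mod_cast hgrowth N) (half_pos hε)
  refine ⟨N, fun s hs ↦ ?_⟩
  have hmono : S ^ N ⊆ S ^ (N + 1) := pow_subset_pow_right h1 N.le_succ
  have hsub : (s * ·) '' S ^ N \ S ^ N ⊆ S ^ (N + 1) \ S ^ N := by
    refine sdiff_subset_sdiff_left ?_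
    rintro _ ⟨x, hx, rfl⟩
    rw [pow_succ']
    exact mul_mem_mul hs hx
  have hdiff : (((s * ·) '' S ^ N \ S ^ N).ncard : ℝ) ≤ (S ^ (N + 1)).ncard - (S ^ N).ncard := by
    rw [← Nat.cast_sub (ncard_le_ncard hmono (hS.pow _)), ← ncard_sdiff hmono (hS.pow _)]
    exact_mod_cast ncard_le_ncard hsub (hS.pow _).sdiff
  have hsymm : ((symmDiff ((s * ·) '' S ^ N) (S ^ N)).ncard : ℝ) ≤
      2 * (((s * ·) '' S ^ N \ S ^ N).ncard : ℝ) := by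
    exact_mod_cast Set.ncard_symmDiff_le_two_mul_ncard_sdiff ((hS.pow N).image _) (hS.pow N)
      (ncard_image_of_injective _ (mul_right_injective s))
  linarith

theorem image_conj_pow_eq {S : Set G} (hS : ∀ g, ∀ x ∈ S, g * x * g⁻¹ ∈ S) (g : G) (N : ℕ) :
    (fun x ↦ g * x * g⁻¹) '' S ^ N = S ^ N := by
  have himage : MulAut.conj g '' S = S :=
    Subset.antisymm (image_subset_iff.2 fun x hx ↦ hS g x hx) fun x hx ↦
      ⟨g⁻¹ * x * g, by simpa using hS g⁻¹ x hx, by simp [mul_assoc]⟩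
  rw [show (fun x ↦ g * x * g⁻¹) = MulAut.conj g from rfl, image_pow, himage]

theorem exists_pow_ncard_symmDiff_le_of_subset_fcCenter {S : Set G} (hS : S.Finite)
    (h1 : 1 ∈ S) (hSG : S ⊆ fcCenter G) {ε : ℝ} (hε : 0 < ε) :
    ∃ N, ∀ s ∈ S, ((symmDiff ((s * ·) '' S ^ N) (S ^ N)).ncard : ℝ) ≤ ε * (S ^ N).ncard := by
  have := finiteIndex_centralizer_of_subset_fcCenter hS hSG
  obtain ⟨c, D, hgrowth⟩ := exists_ncard_pow_le_mul_pow hS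
  exact exists_pow_ncard_symmDiff_le hS h1 hgrowth hε

end

theorem exists_conj_invariant_exhaustion_fcCenter (H : Type*) [Group H] [Countable H] :
    ∃ S : ℕ → Set H, (∀ n, (S n).Finite ∧ 1 ∈ S n ∧ S n ⊆ fcCenter H ∧
      ∀ g, ∀ x ∈ S n, g * x * g⁻¹ ∈ S n) ∧ ∀ h ∈ fcCenter H, ∀ᶠ n in atTop, h ∈ S n := by
  obtain ⟨e, he⟩ := (to_countable (fcCenter H : Set H)).exists_eq_range ⟨1, one_mem _⟩
  have hSG n : Group.conjugatesOfSet (insert 1 (e '' Iic n)) ⊆ fcCenter H :=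
    Group.conjugatesOfSet_subset (insert_subset (one_mem _) (he ▸ image_subset_range e _))
  refine ⟨fun n ↦ Group.conjugatesOfSet (insert 1 (e '' Iic n)), fun n ↦ ⟨?_, ?_, hSG n,
    fun _ _ ↦ Group.conj_mem_conjugatesOfSet⟩, fun h hh ↦ ?_⟩
  · exact finite_conjugatesOfSet_of_subset_fcCenter ((finite_Iic n).image e |>.insert 1)
      (Group.subset_conjugatesOfSet.trans (hSG n))
  · exact Group.subset_conjugatesOfSet (mem_insert 1 _)
  · obtain ⟨m, rfl⟩ : h ∈ range e := he ▸ hh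
    exact eventually_atTop.2 ⟨m, fun n hn ↦
      Group.subset_conjugatesOfSet (mem_insert_of_mem 1 ⟨m, hn, rfl⟩)⟩

/-- (Weak compactness, relative to `H^{fc}`, of the conjugation action
`H ↷ L(H^{fc})`, combinatorial form.)  For every countable group `H` there exist finite
nonempty subsets `Eₙ` of the FC-center `H^{fc}` — so that the unit vectors
`ηₙ = |Eₙ|^{-1/2} Σ_{a ∈ Eₙ} δ_a ⊗ δ_a ∈ ℓ²(H^{fc}) ⊗ ℓ²(H^{fc})` witness weak
compactness — such that
(i) `|g Eₙ g⁻¹ △ Eₙ| / |Eₙ| → 0` for every `g ∈ H`, and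
(ii) `|h Eₙ △ Eₙ| / |Eₙ| → 0` for every `h ∈ H^{fc}`. -/
theorem stmt11 {H : Type*} [Group H] [Countable H] :
    ∃ E : ℕ → Set H,
      (∀ n, E n ⊆ {h : H | (Set.range fun g : H => g * h * g⁻¹).Finite} ∧
        (E n).Finite ∧ (E n).Nonempty) ∧
      (∀ g : H, Tendsto
        (fun n => ((symmDiff ((fun x => g * x * g⁻¹) '' E n) (E n)).ncard : ℝ) /
          ((E n).ncard : ℝ)) atTop (nhds 0)) ∧
      (∀ h : H, (Set.range fun g : H => g * h * g⁻¹).Finite →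
        Tendsto
          (fun n => ((symmDiff ((h * ·) '' E n) (E n)).ncard : ℝ) /
            ((E n).ncard : ℝ)) atTop (nhds 0)) := by
  obtain ⟨S, hS, hexhaust⟩ := exists_conj_invariant_exhaustion_fcCenter H
  choose hSfin hS1 hSG hSconj using hS
  choose N hN using fun n ↦ exists_pow_ncard_symmDiff_le_of_subset_fcCenter (hSfin n) (hS1 n)
    (hSG n) (Nat.one_div_pos_of_nat (n := n))
  refine ⟨fun n ↦ S n ^ N n, fun n ↦ ⟨Subgroup.pow_subset (hSG n), (hSfin n).pow _,
    ⟨1, one_mem_pow (hS1 n)⟩⟩, fun g ↦ ?_, fun h hh ↦ ?_⟩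
  · simp only [image_conj_pow_eq (hSconj _), symmDiff_self, bot_eq_empty, ncard_empty,
      Nat.cast_zero, zero_div, tendsto_const_nhds]
  · refine tendsto_of_tendsto_of_tendsto_of_le_of_le' tendsto_const_nhds
      tendsto_one_div_add_atTop_nhds_zero_nat (.of_forall fun n ↦ by positivity)
      ((hexhaust h hh).mono fun n hn ↦ ?_)
    have hpos : (0 : ℝ) < (S n ^ N n).ncard :=
      mod_cast (ncard_pos ((hSfin n).pow _)).2 ⟨1, one_mem_pow (hS1 n)⟩
    rw [div_le_iff₀ hpos]
    exact hN n h hn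
end

section
/- Let M be a finite von Neumann algebra with von Neumann subalgebras B, D ⊆ C ⊆ M such that the normalizer of D in M generates M (i.e., N_M(D)'' = M). If B embeds into D inside M in the sense of Popa (B ≺_M D), then B embeds into D inside C (B ≺_C D). -/
/-!
Every `x ∈ M` is a linear combination of unitaries `v` normalizing `D`, and for such `v` the
map `E_D` commutes with `Ad v`. Hence, for `b ∈ B ⊆ C`,
`‖E_D(v b y)‖₂ = ‖v E_D(b y v) v*‖₂ = ‖E_D(b y v)‖₂ = ‖E_D(b E_C(y v))‖₂`,
so after expanding each `x_i` the coefficients `1` and `E_C(y_i v)` lie in `C`, at the cost of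
a constant in the lower bound.
-/

open Finset

lemma Submonoid.span_eq_top_of_adjoin_eq_top {R A : Type*} [CommSemiring R] [Semiring A]
    [Algebra R A] (S : Submonoid A) (h : Algebra.adjoin R (S : Set A) = ⊤) :
    Submodule.span R (S : Set A) = ⊤ := by
  rw [← Submonoid.closure_eq S, ← Algebra.adjoin_eq_span, h, Algebra.top_toSubmodule]

section

variable {M : Type*} [Ring M] [Algebra ℂ M] [StarRing M]

/-- `‖z‖₂²` for the trace `τ`. -/
def traceNormSq (τ : M →ₗ[ℂ] ℂ) (z : M) : ℝ := (τ (star z * z)).re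

section TraceNorm

variable {τ : M →ₗ[ℂ] ℂ}

lemma traceNormSq_add_add_traceNormSq_sub (a b : M) :
    traceNormSq τ (a + b) + traceNormSq τ (a - b) =
      2 * traceNormSq τ a + 2 * traceNormSq τ b := by
  simp only [traceNormSq, star_add, star_sub, add_mul, mul_add, sub_mul, mul_sub, map_add,
    map_sub, Complex.add_re, Complex.sub_re]
  ring

lemma traceNormSq_add_le (hτ_pos : ∀ z : M, 0 ≤ traceNormSq τ z) (a b : M) :
    traceNormSq τ (a + b) ≤ 2 * traceNormSq τ a + 2 * traceNormSq τ b := by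
  linarith [traceNormSq_add_add_traceNormSq_sub (τ := τ) a b, hτ_pos (a - b)]

lemma traceNormSq_sum_le (hτ_pos : ∀ z : M, 0 ≤ traceNormSq τ z) {ι : Type*}
    (s : Finset ι) (f : ι → M) :
    traceNormSq τ (∑ i ∈ s, f i) ≤ 2 ^ #s * ∑ i ∈ s, traceNormSq τ (f i) := by
  induction s using Finset.cons_induction with
  | empty => simp [traceNormSq]
  | cons i s hi ih =>
    rw [sum_cons, sum_cons, card_cons, pow_succ]
    have h2s : (1 : ℝ) ≤ 2 ^ #s := one_le_pow₀ (by norm_num)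
    calc traceNormSq τ (f i + ∑ j ∈ s, f j)
        ≤ 2 * traceNormSq τ (f i) + 2 * (2 ^ #s * ∑ j ∈ s, traceNormSq τ (f j)) := by
          linarith [traceNormSq_add_le hτ_pos (f i) (∑ j ∈ s, f j)]
      _ ≤ 2 ^ #s * 2 * (traceNormSq τ (f i) + ∑ j ∈ s, traceNormSq τ (f j)) := by
          nlinarith [mul_nonneg (hτ_pos (f i)) (sub_nonneg.mpr h2s)]

lemma traceNormSq_unitary_conj (hτ_trace : ∀ x y : M, τ (x * y) = τ (y * x)) {v : M}
    (hv : v ∈ unitary M) (z : M) : traceNormSq τ (v * z * star v) = traceNormSq τ z := by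
  have : star (v * z * star v) * (v * z * star v) = v * (star z * z * star v) := by
    simp only [star_mul, star_star, mul_assoc, ← mul_assoc (star v) v,
      Unitary.star_mul_self_of_mem hv, one_mul]
  rw [traceNormSq, this, hτ_trace, mul_assoc, Unitary.star_mul_self_of_mem hv, mul_one,
    traceNormSq]

end TraceNorm

variable [StarModule ℂ M]

/-- The normalizer `N_M(D)`. -/
def unitaryNormalizer (D : StarSubalgebra ℂ M) : Submonoid M where
  carrier := {v | v ∈ unitary M ∧ (∀ d ∈ D, v * d * star v ∈ D) ∧ ∀ d ∈ D, star v * d * v ∈ D}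
  one_mem' := ⟨one_mem _, by simp, by simp⟩
  mul_mem' := by
    rintro v w ⟨hv, hvD, hvD'⟩ ⟨hw, hwD, hwD'⟩
    refine ⟨mul_mem hv hw, fun d hd => ?_, fun d hd => ?_⟩
    · simpa only [star_mul, mul_assoc] using hvD _ (hwD d hd)
    · simpa only [star_mul, mul_assoc] using hwD' _ (hvD' d hd)

section CondExp

variable {τ : M →ₗ[ℂ] ℂ} {D : StarSubalgebra ℂ M} {ED : M →ₗ[ℂ] M}

lemma trace_star_mul_condExp
    (hED_bimod : ∀ d₁ ∈ D, ∀ d₂ ∈ D, ∀ x : M, ED (d₁ * x * d₂) = d₁ * ED x * d₂)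
    (hED_trace : ∀ x : M, τ (ED x) = τ x) {e : M} (he : e ∈ D) (z : M) :
    τ (star e * ED z) = τ (star e * z) := by
  simpa only [mul_one, hED_trace] using
    congrArg τ (hED_bimod (star e) (star_mem he) 1 (one_mem D) z).symm

lemma condExp_eq_of_forall_trace (hτ_faithful : ∀ x : M, τ (star x * x) = 0 → x = 0)
    (hED_mem : ∀ x : M, ED x ∈ D)
    (hED_bimod : ∀ d₁ ∈ D, ∀ d₂ ∈ D, ∀ x : M, ED (d₁ * x * d₂) = d₁ * ED x * d₂)
    (hED_trace : ∀ x : M, τ (ED x) = τ x) {z w : M} (hw : w ∈ D)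
    (hzw : ∀ e ∈ D, τ (star e * w) = τ (star e * z)) : ED z = w := by
  have hdiff : ED z - w ∈ D := sub_mem (hED_mem z) hw
  refine sub_eq_zero.mp (hτ_faithful _ ?_)
  rw [mul_sub, map_sub, trace_star_mul_condExp hED_bimod hED_trace hdiff, hzw _ hdiff, sub_self]

lemma condExp_unitaryNormalizer_conj (hτ_trace : ∀ x y : M, τ (x * y) = τ (y * x))
    (hτ_faithful : ∀ x : M, τ (star x * x) = 0 → x = 0) (hED_mem : ∀ x : M, ED x ∈ D)
    (hED_bimod : ∀ d₁ ∈ D, ∀ d₂ ∈ D, ∀ x : M, ED (d₁ * x * d₂) = d₁ * ED x * d₂)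
    (hED_trace : ∀ x : M, τ (ED x) = τ x) {v : M} (hv : v ∈ unitaryNormalizer D) (z : M) :
    ED (v * z * star v) = v * ED z * star v := by
  obtain ⟨-, hvD, hvD'⟩ := hv
  refine condExp_eq_of_forall_trace hτ_faithful hED_mem hED_bimod hED_trace
    (hvD _ (hED_mem z)) fun e he => ?_
  have hconj : ∀ u : M, τ (star e * (v * u * star v)) = τ (star (star v * e * v) * u) := by
    intro u
    rw [star_mul, star_mul, star_star, ← mul_assoc, ← mul_assoc, hτ_trace]
    simp only [mul_assoc]
  rw [hconj, hconj, trace_star_mul_condExp hED_bimod hED_trace (hvD' e he)]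

end CondExp

/-- The identity `E_D(u b v) = u E_D(b v u) u*` for `u ∈ N_M(D)`, measured in `‖·‖₂`, with
`v u` then replaced by `E_C(v u)`. -/
lemma traceNormSq_condExp_unitaryNormalizer_mul {τ : M →ₗ[ℂ] ℂ} {C D : StarSubalgebra ℂ M}
    {ED EC : M →ₗ[ℂ] M} (hτ_trace : ∀ x y : M, τ (x * y) = τ (y * x))
    (hτ_faithful : ∀ x : M, τ (star x * x) = 0 → x = 0) (hED_mem : ∀ x : M, ED x ∈ D)
    (hED_bimod : ∀ d₁ ∈ D, ∀ d₂ ∈ D, ∀ x : M, ED (d₁ * x * d₂) = d₁ * ED x * d₂)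
    (hED_trace : ∀ x : M, τ (ED x) = τ x)
    (hEC_bimod : ∀ c₁ ∈ C, ∀ c₂ ∈ C, ∀ x : M, EC (c₁ * x * c₂) = c₁ * EC x * c₂)
    (hEDC : ∀ x : M, ED (EC x) = ED x) {u b : M} (hu : u ∈ unitaryNormalizer D) (hb : b ∈ C)
    (y : M) : traceNormSq τ (ED (u * b * y)) = traceNormSq τ (ED (b * EC (y * u))) := by
  have hEC : EC (b * (y * u)) = b * EC (y * u) := by
    simpa only [mul_one] using hEC_bimod b hb 1 (one_mem C) (y * u)
  have hconj : u * b * y = u * (b * (y * u)) * star u := by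
    simp only [mul_assoc, Unitary.mul_star_self_of_mem hu.1, mul_one]
  rw [hconj, condExp_unitaryNormalizer_conj hτ_trace hτ_faithful hED_mem hED_bimod hED_trace hu,
    traceNormSq_unitary_conj hτ_trace hu.1, ← hEDC, hEC]

lemma traceNormSq_condExp_sum_smul_mul_le {τ : M →ₗ[ℂ] ℂ} {C D : StarSubalgebra ℂ M}
    {ED EC : M →ₗ[ℂ] M} (hτ_trace : ∀ x y : M, τ (x * y) = τ (y * x))
    (hτ_pos : ∀ z : M, 0 ≤ traceNormSq τ z)
    (hτ_faithful : ∀ x : M, τ (star x * x) = 0 → x = 0) (hED_mem : ∀ x : M, ED x ∈ D)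
    (hED_bimod : ∀ d₁ ∈ D, ∀ d₂ ∈ D, ∀ x : M, ED (d₁ * x * d₂) = d₁ * ED x * d₂)
    (hED_trace : ∀ x : M, τ (ED x) = τ x)
    (hEC_bimod : ∀ c₁ ∈ C, ∀ c₂ ∈ C, ∀ x : M, EC (c₁ * x * c₂) = c₁ * EC x * c₂)
    (hEDC : ∀ x : M, ED (EC x) = ED x) {ι : Type*} [Fintype ι] (a : ι → ℂ)
    (u : ι → unitaryNormalizer D) {b : M} (hb : b ∈ C) (y : M) :
    traceNormSq τ (ED ((∑ j, a j • (u j : M)) * b * y)) ≤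
      2 ^ Fintype.card ι * ∑ j, traceNormSq τ (ED (b * EC ((a j • y) * u j))) := by
  have hexpand : (∑ j, a j • (u j : M)) * b * y = ∑ j, (u j : M) * b * (a j • y) := by
    simp only [sum_mul, smul_mul_assoc, mul_smul_comm]
  rw [hexpand, map_sum, ← card_univ]
  refine (traceNormSq_sum_le hτ_pos _ _).trans_eq ?_
  simp only [traceNormSq_condExp_unitaryNormalizer_mul hτ_trace hτ_faithful hED_mem hED_bimod
    hED_trace hEC_bimod hEDC (u _).2 hb]

end

theorem stmt17_general {M : Type*} [Ring M] [Algebra ℂ M] [StarRing M] [StarModule ℂ M]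
    -- the faithful normal tracial state `τ`
    (τ : M →ₗ[ℂ] ℂ)
    (hτ_trace : ∀ x y : M, τ (x * y) = τ (y * x))
    (hτ_pos : ∀ x : M, 0 ≤ (τ (star x * x)).re ∧ (τ (star x * x)).im = 0)
    (hτ_faithful : ∀ x : M, τ (star x * x) = 0 → x = 0)
    -- the subalgebras `B, D ⊆ C ⊆ M`
    (B D C : StarSubalgebra ℂ M) (hBC : B ≤ C)
    -- the trace-preserving conditional expectation `E_D : M → D`
    (ED : M →ₗ[ℂ] M)
    (hED_mem : ∀ x : M, ED x ∈ D)
    (hED_bimod : ∀ d₁ ∈ D, ∀ d₂ ∈ D, ∀ x : M, ED (d₁ * x * d₂) = d₁ * ED x * d₂)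
    (hED_trace : ∀ x : M, τ (ED x) = τ x)
    -- the trace-preserving conditional expectation `E_C : M → C`
    (EC : M →ₗ[ℂ] M)
    (hEC_mem : ∀ x : M, EC x ∈ C)
    (hEC_bimod : ∀ c₁ ∈ C, ∀ c₂ ∈ C, ∀ x : M, EC (c₁ * x * c₂) = c₁ * EC x * c₂)
    -- compatibility `E_D ∘ E_C = E_D`
    (hEDC : ∀ x : M, ED (EC x) = ED x)
    -- `D` is regular in `M`: the normalizing unitaries of `D` generate `M`
    (hreg : Algebra.adjoin ℂ {v : M | (star v * v = 1 ∧ v * star v = 1) ∧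
      (∀ d ∈ D, v * d * star v ∈ D) ∧ ∀ d ∈ D, star v * d * v ∈ D} = ⊤)
    -- `B ≺_M D`
    (hint : ∃ (n : ℕ) (x y : Fin n → M) (d : ℝ), 0 < d ∧
      ∀ b ∈ B, star b * b = 1 → b * star b = 1 →
        d ≤ ∑ i, (τ (star (ED (x i * b * y i)) * ED (x i * b * y i))).re) :
    -- then `B ≺_C D`
    ∃ (n : ℕ) (x y : Fin n → M) (d : ℝ), 0 < d ∧ (∀ i, x i ∈ C ∧ y i ∈ C) ∧
      ∀ b ∈ B, star b * b = 1 → b * star b = 1 →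
        d ≤ ∑ i, (τ (star (ED (x i * b * y i)) * ED (x i * b * y i))).re := by
  obtain ⟨n, x, y, d, hd, hxy⟩ := hint
  have hspan := (unitaryNormalizer D).span_eq_top_of_adjoin_eq_top hreg
  choose p a u hu using fun i => Submodule.mem_span_set'.mp (hspan ▸ Submodule.mem_top (x := x i))
  let y' : (Σ i, Fin (p i)) → M := fun σ => EC ((a σ.1 σ.2 • y σ.1) * u σ.1 σ.2)
  set K : ℝ := 2 ^ ∑ i, p i
  have hK : 0 < K := by positivity
  refine ⟨_, 1, y' ∘ (Fintype.equivFin _).symm, d / K, div_pos hd hK,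
    fun _ => ⟨one_mem C, hEC_mem _⟩, fun b hb hb₁ hb₂ => ?_⟩
  change d / K ≤ ∑ m, traceNormSq τ (ED (1 * b * y' ((Fintype.equivFin _).symm m)))
  rw [div_le_iff₀ hK, Equiv.sum_comp (Fintype.equivFin _).symm
    (fun σ => traceNormSq τ (ED (1 * b * y' σ))), Fintype.sum_sigma, sum_mul]
  refine (hxy b hb hb₁ hb₂).trans (sum_le_sum fun i _ => ?_)
  calc traceNormSq τ (ED (x i * b * y i))
      ≤ 2 ^ p i * ∑ j, traceNormSq τ (ED (b * EC ((a i j • y i) * u i j))) := by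
        simpa only [← hu i, Fintype.card_fin] using traceNormSq_condExp_sum_smul_mul_le hτ_trace
          (fun z => (hτ_pos z).1) hτ_faithful hED_mem hED_bimod hED_trace hEC_bimod hEDC
          (a i) (u i) (hBC hb) (y i)
    _ ≤ (∑ j, traceNormSq τ (ED (1 * b * y' ⟨i, j⟩))) * K := by
        rw [mul_comm]
        simp only [one_mul, y']
        gcongr
        · exact sum_nonneg fun j _ => (hτ_pos _).1
        · exact pow_le_pow_right₀ one_le_two (single_le_sum (fun _ _ => Nat.zero_le _) (mem_univ i))

/-- Popa's intertwining passes to intermediate algebras with regular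
target.  Let `(M, τ)` be a finite (tracial) von Neumann algebra with von Neumann
subalgebras `B, D ⊆ C ⊆ M` such that the normalizer of `D` generates `M`
(`N_M(D)'' = M`).  If `B ≺_M D` in the sense of Popa (quantitative form: there are
finitely many `x_i, y_i ∈ M` and `d > 0` with `Σᵢ ‖E_D(x_i b y_i)‖₂² ≥ d` for every
unitary `b ∈ B`), then `B ≺_C D`, i.e. the elements `x_i, y_i` can be chosen in `C`. -/
theorem stmt17 {M : Type*} [Ring M] [Algebra ℂ M] [StarRing M] [StarModule ℂ M]
    -- the faithful normal tracial state `τ`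
    (τ : M →ₗ[ℂ] ℂ)
    (hτ_trace : ∀ x y : M, τ (x * y) = τ (y * x))
    (hτ_one : τ 1 = 1)
    (hτ_star : ∀ x : M, τ (star x) = starRingEnd ℂ (τ x))
    (hτ_pos : ∀ x : M, 0 ≤ (τ (star x * x)).re ∧ (τ (star x * x)).im = 0)
    (hτ_faithful : ∀ x : M, τ (star x * x) = 0 → x = 0)
    -- the subalgebras `B, D ⊆ C ⊆ M`
    (B D C : StarSubalgebra ℂ M) (hBC : B ≤ C) (hDC : D ≤ C)
    -- the trace-preserving conditional expectation `E_D : M → D`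
    (ED : M →ₗ[ℂ] M)
    (hED_mem : ∀ x : M, ED x ∈ D)
    (hED_id : ∀ d ∈ D, ED d = d)
    (hED_bimod : ∀ d₁ ∈ D, ∀ d₂ ∈ D, ∀ x : M, ED (d₁ * x * d₂) = d₁ * ED x * d₂)
    (hED_star : ∀ x : M, ED (star x) = star (ED x))
    (hED_trace : ∀ x : M, τ (ED x) = τ x)
    -- the trace-preserving conditional expectation `E_C : M → C`
    (EC : M →ₗ[ℂ] M)
    (hEC_mem : ∀ x : M, EC x ∈ C)
    (hEC_id : ∀ c ∈ C, EC c = c)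
    (hEC_bimod : ∀ c₁ ∈ C, ∀ c₂ ∈ C, ∀ x : M, EC (c₁ * x * c₂) = c₁ * EC x * c₂)
    (hEC_star : ∀ x : M, EC (star x) = star (EC x))
    (hEC_trace : ∀ x : M, τ (EC x) = τ x)
    -- compatibility `E_D ∘ E_C = E_D`
    (hEDC : ∀ x : M, ED (EC x) = ED x)
    -- `D` is regular in `M`: the normalizing unitaries of `D` generate `M`
    (hreg : Algebra.adjoin ℂ {v : M | (star v * v = 1 ∧ v * star v = 1) ∧
      (∀ d ∈ D, v * d * star v ∈ D) ∧ ∀ d ∈ D, star v * d * v ∈ D} = ⊤)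
    -- `B ≺_M D`
    (hint : ∃ (n : ℕ) (x y : Fin n → M) (d : ℝ), 0 < d ∧
      ∀ b ∈ B, star b * b = 1 → b * star b = 1 →
        d ≤ ∑ i, (τ (star (ED (x i * b * y i)) * ED (x i * b * y i))).re) :
    -- then `B ≺_C D`
    ∃ (n : ℕ) (x y : Fin n → M) (d : ℝ), 0 < d ∧ (∀ i, x i ∈ C ∧ y i ∈ C) ∧
      ∀ b ∈ B, star b * b = 1 → b * star b = 1 →
        d ≤ ∑ i, (τ (star (ED (x i * b * y i)) * ED (x i * b * y i))).re :=
  stmt17_general τ hτ_trace hτ_pos hτ_faithful B D C hBC ED hED_mem hED_bimod hED_trace EC hEC_mem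
    hEC_bimod hEDC hreg hint
end
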